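/- For T = {8,2}: b(n) := n(n+6)(n+5)(n²+15n+8)²/(168(n³+27n²+356n-240)) equals (n⁴+14n³-133n²+2638n-10584)/168 + (-4032n²+26208n-15120)/(n³+27n²+356n-240), and for n ≥ 677343 the quantity b(n) is never an integer. -/

import Mathlib

/-!
Dividing the numerator of `168 b(n)` by the cubic `D(n) = n³ + 27n² + 356n - 240` gives an integer
polynomial `q(n)` plus the remainder `168 r(n)`, where `r(n) = (-4032n² + 26208n - 15120) / D(n)`.
For `n ≥ 677343` one has `-1/168 < r(n) < 0`, so `168 b(n)` lies strictly between the consecutive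
integers `q(n) - 1` and `q(n)`; hence `b(n)` is not an integer.
-/

noncomputable def bn82 (n : ℕ) : ℝ :=
  (n : ℝ) * ((n : ℝ) + 6) * ((n : ℝ) + 5) * ((n : ℝ) ^ 2 + 15 * (n : ℝ) + 8) ^ 2
    / (168 * ((n : ℝ) ^ 3 + 27 * (n : ℝ) ^ 2 + 356 * (n : ℝ) - 240))

theorem not_exists_intCast_eq_of_mul_sub_mem_Ioo {b : ℝ} (k p : ℤ)
    (h : k * b - p ∈ Set.Ioo (-1 : ℝ) 0) : ¬∃ m : ℤ, b = m := by
  rintro ⟨m, rfl⟩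
  obtain ⟨hlower, hupper⟩ := h
  have hlower' : (-1 : ℤ) < k * m - p := by exact_mod_cast hlower
  have hupper' : k * m - p < 0 := by exact_mod_cast hupper
  omega

theorem bn82Denom_pos {x : ℝ} (hx : 1 ≤ x) : 0 < x ^ 3 + 27 * x ^ 2 + 356 * x - 240 := by
  nlinarith [sq_nonneg x]

theorem bn82Denom_natCast_ne_zero (n : ℕ) :
    (n : ℝ) ^ 3 + 27 * (n : ℝ) ^ 2 + 356 * (n : ℝ) - 240 ≠ 0 := by
  rcases Nat.eq_zero_or_pos n with rfl | hn
  · norm_num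
  · exact (bn82Denom_pos (by exact_mod_cast hn)).ne'

theorem bn82_eq_div_add_div (n : ℕ) : bn82 n =
    ((n : ℝ) ^ 4 + 14 * (n : ℝ) ^ 3 - 133 * (n : ℝ) ^ 2 + 2638 * (n : ℝ) - 10584) / 168
      + (-4032 * (n : ℝ) ^ 2 + 26208 * (n : ℝ) - 15120)
        / ((n : ℝ) ^ 3 + 27 * (n : ℝ) ^ 2 + 356 * (n : ℝ) - 240) := by
  have hD := bn82Denom_natCast_ne_zero n
  rw [bn82, div_add_div _ _ (by norm_num) hD, div_eq_div_iff (mul_ne_zero (by norm_num) hD)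
    (mul_ne_zero (by norm_num) hD)]
  ring

theorem bn82Rem_mem_Ioo {x : ℝ} (hx : 677343 ≤ x) :
    168 * ((-4032 * x ^ 2 + 26208 * x - 15120) / (x ^ 3 + 27 * x ^ 2 + 356 * x - 240))
      ∈ Set.Ioo (-1 : ℝ) 0 := by
  have hD := bn82Denom_pos (by linarith : (1 : ℝ) ≤ x)
  rw [mul_div_assoc', Set.mem_Ioo, lt_div_iff₀ hD, div_lt_iff₀ hD]
  constructor
  · -- the bound `677343` is where this factorization becomes visibly positive
    have : x ^ 3 + 27 * x ^ 2 + 356 * x - 240 + 168 * (-4032 * x ^ 2 + 26208 * x - 15120)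
        = x * (x - 677343) * (x - 6) + (339242 * x - 2540400) := by ring
    nlinarith [mul_nonneg (mul_nonneg (by linarith : (0 : ℝ) ≤ x) (by linarith : (0 : ℝ) ≤ x - 677343))
      (by linarith : (0 : ℝ) ≤ x - 6)]
  · nlinarith

/-- The decomposition of `b_{n,{8,2}}` and its non-integrality for `n ≥ 677343`. -/
theorem bn82_props :
    (∀ n : ℕ, bn82 n =
        ((n : ℝ) ^ 4 + 14 * (n : ℝ) ^ 3 - 133 * (n : ℝ) ^ 2 + 2638 * (n : ℝ) - 10584) / 168
          + (-4032 * (n : ℝ) ^ 2 + 26208 * (n : ℝ) - 15120)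
            / ((n : ℝ) ^ 3 + 27 * (n : ℝ) ^ 2 + 356 * (n : ℝ) - 240))
      ∧ ∀ n : ℕ, 677343 ≤ n → ¬∃ m : ℤ, bn82 n = m := by
  refine ⟨bn82_eq_div_add_div, fun n hn => ?_⟩
  apply not_exists_intCast_eq_of_mul_sub_mem_Ioo 168
    ((n : ℤ) ^ 4 + 14 * (n : ℤ) ^ 3 - 133 * (n : ℤ) ^ 2 + 2638 * (n : ℤ) - 10584)
  convert bn82Rem_mem_Ioo (x := n) (by exact_mod_cast hn) using 1
  rw [bn82_eq_div_add_div]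
  push_cast
  ring
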